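/- Let X be a Banach space, Y a closed subspace, and t a strong isometric embedding of Y into X, i.e., t = lim_i T_i|_Y pointwise for surjective isometries T_i of X. Then for every x in the isometric envelope Env(Y), the net (T_i x) converges, and the map t̃ : Env(Y) → X defined by t̃(x) = lim_i T_i(x) is the unique strong isometric embedding of Env(Y) into X extending t. -/
import Mathlib


open Filter

/-- `x` belongs to the isometric envelope of the set `Y` in `X`: every net of surjective
linear isometries of `X` converging pointwise on `Y` to the identity converges at `x`
to `x` (nets are rendered by filters on the isometry group). -/
def MemEnv {X : Type*} [NormedAddCommGroup X] [NormedSpace ℝ X]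
    (Y : Set X) (x : X) : Prop :=
  ∀ F : Filter (X ≃ₗᵢ[ℝ] X), F.NeBot →
    (∀ y ∈ Y, Tendsto (fun T : X ≃ₗᵢ[ℝ] X => T y) F (nhds y)) →
    Tendsto (fun T : X ≃ₗᵢ[ℝ] X => T x) F (nhds x)

/-- `γ : W → X` is a strong isometric embedding (SOT-limit of restrictions of surjective
isometries of `X`). -/
def IsStrongEmb {X : Type*} [NormedAddCommGroup X] [NormedSpace ℝ X]
    (W : Submodule ℝ X) (γ : W →ₗᵢ[ℝ] X) : Prop :=
  ∀ ε > (0:ℝ), ∀ s : Finset W, ∃ T : X ≃ₗᵢ[ℝ] X, ∀ w ∈ s, ‖T (w : X) - γ w‖ ≤ ε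

/-- Helper: if both nets of isometries converge at `y` to the same limit, then
the "composition" net `(U p)⁻¹ (V p y)` converges to `y`. -/
private lemma symm_comp_tendsto {X : Type*} [NormedAddCommGroup X] [NormedSpace ℝ X]
    {α : Type*} {L : Filter α} (U V : α → X ≃ₗᵢ[ℝ] X) {y c : X}
    (hU : Filter.Tendsto (fun p => U p y) L (nhds c))
    (hV : Filter.Tendsto (fun p => V p y) L (nhds c)) :
    Filter.Tendsto (fun p => (U p).symm (V p y)) L (nhds y) := by
  rw [tendsto_iff_norm_sub_tendsto_zero] at hU hV ⊢
  have h : ∀ p, ‖(U p).symm (V p y) - y‖ ≤ ‖V p y - c‖ + ‖U p y - c‖ := by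
    intro p
    have h1 : ‖(U p).symm (V p y) - y‖ = ‖V p y - U p y‖ := by
      rw [← (U p).norm_map ((U p).symm (V p y) - y), map_sub,
        (U p).apply_symm_apply]
    rw [h1]
    calc ‖V p y - U p y‖ = ‖(V p y - c) - (U p y - c)‖ := by abel_nf
    _ ≤ ‖V p y - c‖ + ‖U p y - c‖ := norm_sub_le _ _
  exact squeeze_zero (fun p => norm_nonneg _) h (by simpa using hV.add hU)

/-- Helper: converse direction, extracting that the difference tends to zero. -/
private lemma sub_tendsto_of_symm_comp {X : Type*} [NormedAddCommGroup X] [NormedSpace ℝ X]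
    {α : Type*} {L : Filter α} (U V : α → X ≃ₗᵢ[ℝ] X) {x : X}
    (h : Filter.Tendsto (fun p => (U p).symm (V p x)) L (nhds x)) :
    Filter.Tendsto (fun p => V p x - U p x) L (nhds 0) := by
  rw [tendsto_iff_norm_sub_tendsto_zero] at h
  rw [tendsto_zero_iff_norm_tendsto_zero]
  have heq : ∀ p, ‖V p x - U p x‖ = ‖(U p).symm (V p x) - x‖ := by
    intro p
    rw [← (U p).norm_map ((U p).symm (V p x) - x), map_sub,
      (U p).apply_symm_apply]
  simpa only [heq] using h

/-- If `t : Y → X` is a strong isometric embedding, realized as a pointwise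
limit `t = lim_i T_i|_Y` of surjective isometries of `X` along a net, and `E` is the
isometric envelope of `Y`, then the nets `(T_i x)` converge for all `x ∈ E`, and the
limit map `t̃ : E → X` is the unique strong isometric embedding of `E` extending `t`. -/
theorem extension_to_envelope
    {X : Type*} [NormedAddCommGroup X] [NormedSpace ℝ X] [CompleteSpace X]
    (Y : Submodule ℝ X) (hYc : IsClosed (Y : Set X))
    {ι : Type*} (l : Filter ι) (hl : l.NeBot)
    (T : ι → (X ≃ₗᵢ[ℝ] X))
    (t : Y →ₗᵢ[ℝ] X)
    (hlim : ∀ y : Y, Tendsto (fun i => T i (y : X)) l (nhds (t y)))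
    (E : Submodule ℝ X) (hE : ∀ x : X, x ∈ E ↔ MemEnv (Y : Set X) x) :
    ∃ te : E →ₗᵢ[ℝ] X,
      (∀ x : E, Tendsto (fun i => T i (x : X)) l (nhds (te x))) ∧
      (∀ (y : Y) (x : E), (x : X) = (y : X) → te x = t y) ∧
      IsStrongEmb E te ∧
      (∀ te' : E →ₗᵢ[ℝ] X, IsStrongEmb E te' →
        (∀ (y : Y) (x : E), (x : X) = (y : X) → te' x = t y) → te' = te) := by
  classical
  haveI := hl
  -- Step 1: convergence of T i x for x ∈ E, via the composed net on l ×ˢ l.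
  have hconv : ∀ x : E, ∃ z : X, Tendsto (fun i => T i (x : X)) l (nhds z) := by
    intro x
    have hmem : MemEnv (Y : Set X) (x : X) := (hE x).1 x.2
    set G : ι × ι → (X ≃ₗᵢ[ℝ] X) := fun p => (T p.1).trans (T p.2).symm with hG
    have hGapp : ∀ p z, G p z = (T p.2).symm (T p.1 z) := fun p z => rfl
    have hY : ∀ y ∈ (Y : Set X), Tendsto (fun S : X ≃ₗᵢ[ℝ] X => S y) (Filter.map G (l ×ˢ l)) (nhds y) := by
      intro y hy
      rw [Filter.tendsto_map'_iff]
      have : ((fun S : X ≃ₗᵢ[ℝ] X => S y) ∘ G) = fun p : ι × ι => (T p.2).symm (T p.1 y) := rfl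
      rw [this]
      exact symm_comp_tendsto (fun p : ι × ι => T p.2) (fun p => T p.1)
        ((hlim ⟨y, hy⟩).comp tendsto_snd) ((hlim ⟨y, hy⟩).comp tendsto_fst)
    have hneb : (Filter.map G (l ×ˢ l)).NeBot := (hl.prod hl).map G
    have hx := hmem (Filter.map G (l ×ˢ l)) hneb hY
    rw [Filter.tendsto_map'_iff] at hx
    have hx' : Tendsto (fun p : ι × ι => (T p.2).symm (T p.1 (x : X))) (l ×ˢ l) (nhds (x : X)) := hx
    have hdiff : Tendsto (fun p : ι × ι => T p.1 (x : X) - T p.2 (x : X)) (l ×ˢ l) (nhds 0) :=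
      sub_tendsto_of_symm_comp (fun p : ι × ι => T p.2) (fun p => T p.1) hx'
    -- Cauchy
    have hcauchy : Cauchy (Filter.map (fun i => T i (x : X)) l) := by
      rw [cauchy_map_iff]
      refine ⟨hl, ?_⟩
      rw [Metric.uniformity_basis_dist.tendsto_right_iff]
      intro ε hε
      have := (tendsto_zero_iff_norm_tendsto_zero.1 hdiff)
      have h2 := Metric.tendsto_nhds.1 this ε hε
      filter_upwards [h2] with p hp
      simpa [dist_eq_norm, abs_of_nonneg (norm_nonneg _)] using hp
    obtain ⟨z, hz⟩ := CompleteSpace.complete hcauchy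
    exact ⟨z, hz⟩
  choose f hf using hconv
  -- f is a linear isometry
  have hadd : ∀ x y : E, f (x + y) = f x + f y := by
    intro x y
    refine tendsto_nhds_unique ?_ ((hf x).add (hf y))
    simpa [map_add] using hf (x + y)
  have hsmul : ∀ (c : ℝ) (x : E), f (c • x) = c • f x := by
    intro c x
    refine tendsto_nhds_unique ?_ ((hf x).const_smul c)
    simpa [map_smul] using hf (c • x)
  have hnorm : ∀ x : E, ‖f x‖ = ‖x‖ := by
    intro x
    refine tendsto_nhds_unique ((hf x).norm) ?_
    simpa [(T _).norm_map] using (tendsto_const_nhds : Tendsto (fun _ : ι => ‖(x : X)‖) l _)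
  set te : E →ₗᵢ[ℝ] X :=
    { toFun := f
      map_add' := hadd
      map_smul' := hsmul
      norm_map' := hnorm } with hte
  have hte_app : ∀ x : E, te x = f x := fun x => rfl
  refine ⟨te, fun x => hf x, ?_, ?_, ?_⟩
  · -- agreement with t
    intro y x hxy
    refine tendsto_nhds_unique (hf x) ?_
    rw [hxy]; exact hlim y
  · -- strong embedding
    intro ε hε s
    have h : ∀ᶠ i in l, ∀ w ∈ s, ‖T i (w : X) - te w‖ ≤ ε := by
      rw [Filter.eventually_all_finset]
      intro w _
      have h2 := Metric.tendsto_nhds.1 (hf w) ε hε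
      filter_upwards [h2] with i hi
      rw [dist_eq_norm] at hi
      exact le_of_lt hi
    obtain ⟨i, hi⟩ := h.exists
    exact ⟨T i, hi⟩
  · -- uniqueness
    intro te' hse' hagree'
    -- Y ⊆ E
    have hYE : ∀ y : Y, (y : X) ∈ E := by
      intro y
      refine (hE y).2 ?_
      intro F hF hFY
      exact hFY y y.2
    -- the filter of approximating isometries for te'
    set Idx := {q : ℝ × Finset E // 0 < q.1} with hIdx
    haveI : Nonempty Idx := ⟨⟨(1, ∅), one_pos⟩⟩
    set P : Idx → Set (X ≃ₗᵢ[ℝ] X) := fun q => {S | ∀ w ∈ q.1.2, ‖S (w : X) - te' w‖ ≤ q.1.1}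
      with hP
    set F' : Filter (X ≃ₗᵢ[ℝ] X) := ⨅ q : Idx, Filter.principal (P q) with hF'
    have hdir : Directed (· ≥ ·) fun q : Idx => Filter.principal (P q) := by
      intro a b
      refine ⟨⟨(min a.1.1 b.1.1, a.1.2 ∪ b.1.2), lt_min a.2 b.2⟩, ?_, ?_⟩
      · exact Filter.principal_mono.2 fun S hS w hw =>
          le_trans (hS w (Finset.mem_union_left _ hw)) (min_le_left _ _)
      · exact Filter.principal_mono.2 fun S hS w hw =>
          le_trans (hS w (Finset.mem_union_right _ hw)) (min_le_right _ _)
    haveI hF'neb : F'.NeBot := by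
      refine Filter.iInf_neBot_of_directed' hdir ?_
      intro q
      obtain ⟨S, hS⟩ := hse' q.1.1 q.2 q.1.2
      exact Filter.principal_neBot_iff.2 ⟨S, hS⟩
    have hF'le : ∀ q : Idx, F' ≤ Filter.principal (P q) := fun q => iInf_le _ q
    have hF'conv : ∀ w : E, Tendsto (fun S : X ≃ₗᵢ[ℝ] X => S (w : X)) F' (nhds (te' w)) := by
      intro w
      rw [Metric.tendsto_nhds]
      intro ε hε
      have := hF'le ⟨(ε / 2, {w}), half_pos hε⟩
      rw [Filter.le_principal_iff] at this
      filter_upwards [this] with S hS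
      have := hS w (Finset.mem_singleton_self w)
      rw [dist_eq_norm]
      exact lt_of_le_of_lt this (half_lt_self hε)
    -- composed net
    have hext : ∀ x : E, te' x = te x := by
      intro x
      have hmem : MemEnv (Y : Set X) (x : X) := (hE x).1 x.2
      set H : (X ≃ₗᵢ[ℝ] X) × ι → (X ≃ₗᵢ[ℝ] X) := fun p => p.1.trans (T p.2).symm with hH
      have hY' : ∀ y ∈ (Y : Set X),
          Tendsto (fun S : X ≃ₗᵢ[ℝ] X => S y) (Filter.map H (F' ×ˢ l)) (nhds y) := by
        intro y hy
        rw [Filter.tendsto_map'_iff]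
        have heq : ((fun S : X ≃ₗᵢ[ℝ] X => S y) ∘ H)
            = fun p : (X ≃ₗᵢ[ℝ] X) × ι => (T p.2).symm (p.1 y) := rfl
        rw [heq]
        have hy1 : Tendsto (fun p : (X ≃ₗᵢ[ℝ] X) × ι => p.1 y) (F' ×ˢ l) (nhds (t ⟨y, hy⟩)) := by
          have h1 := hF'conv ⟨y, hYE ⟨y, hy⟩⟩
          rw [hagree' ⟨y, hy⟩ ⟨y, hYE ⟨y, hy⟩⟩ rfl] at h1
          exact h1.comp tendsto_fst
        have hy2 : Tendsto (fun p : (X ≃ₗᵢ[ℝ] X) × ι => T p.2 y) (F' ×ˢ l) (nhds (t ⟨y, hy⟩)) :=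
          (hlim ⟨y, hy⟩).comp tendsto_snd
        exact symm_comp_tendsto (fun p : (X ≃ₗᵢ[ℝ] X) × ι => T p.2) (fun p => p.1) hy2 hy1
      have hneb : (Filter.map H (F' ×ˢ l)).NeBot := (hF'neb.prod hl).map H
      have hx := hmem (Filter.map H (F' ×ˢ l)) hneb hY'
      rw [Filter.tendsto_map'_iff] at hx
      have hx' : Tendsto (fun p : (X ≃ₗᵢ[ℝ] X) × ι => (T p.2).symm (p.1 (x : X)))
          (F' ×ˢ l) (nhds (x : X)) := hx
      have hdiff : Tendsto (fun p : (X ≃ₗᵢ[ℝ] X) × ι => p.1 (x : X) - T p.2 (x : X))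
          (F' ×ˢ l) (nhds 0) :=
        sub_tendsto_of_symm_comp (fun p : (X ≃ₗᵢ[ℝ] X) × ι => T p.2) (fun p => p.1) hx'
      have hx1 : Tendsto (fun p : (X ≃ₗᵢ[ℝ] X) × ι => p.1 (x : X)) (F' ×ˢ l) (nhds (te' x)) :=
        (hF'conv x).comp tendsto_fst
      have hx2 : Tendsto (fun p : (X ≃ₗᵢ[ℝ] X) × ι => T p.2 (x : X)) (F' ×ˢ l) (nhds (te x)) :=
        (hf x).comp tendsto_snd
      have : te' x - te x = 0 := tendsto_nhds_unique (hx1.sub hx2) hdiff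
      exact sub_eq_zero.1 this
    ext x
    exact hext x
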